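/- Let (X, υ) be a compact metric measure space and let 1 < q < ∞. Then limsup_{r → q⁺} λ_{1,r}(X) ≤ λ_{1,q}(X), i.e., for every sequence r_i decreasing to q, limsup_{i → ∞} λ_{1,r_i}(X) ≤ λ_{1,q}(X) (an inequality in (0, ∞]). -/

import Mathlib

open MeasureTheory Metric Filter Set
open scoped Topology NNReal ENNReal
open Classical

variable {X : Type*} [MetricSpace X]

/-- A real-valued function is Lipschitz (with some constant). -/
def IsLipFun (f : X → ℝ) : Prop := ∃ K : ℝ≥0, LipschitzWith K f

/-- The pointwise Lipschitz constant `Lip f (x)`: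
`0` if `x` is isolated, and otherwise the limit (= infimum, by monotonicity)
as `r → 0` of `sup_{y ∈ B_r(x), y ≠ x} |f x - f y| / dist x y`. -/
noncomputable def pLip (f : X → ℝ) (x : X) : ℝ :=
  if 𝓝[≠] x = ⊥ then 0
  else ⨅ r : Ioi (0:ℝ), sSup ((fun y => |f x - f y| / dist x y) '' (ball x r.1 \ {x}))

/-- `γ` is a (unit-speed) minimal geodesic from `x` to `y`. -/
def IsMinGeodesic (γ : ℝ → X) (x y : X) : Prop :=
  γ 0 = x ∧ γ (dist x y) = y ∧
    ∀ s ∈ Icc (0:ℝ) (dist x y), ∀ t ∈ Icc (0:ℝ) (dist x y), dist (γ s) (γ t) = |s - t|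

/-- A metric space is geodesic if any two points are joined by a minimal geodesic. -/
def IsGeodesicSpace (Y : Type*) [MetricSpace Y] : Prop :=
  ∀ x y : Y, ∃ γ : ℝ → Y, IsMinGeodesic γ x y

section MeasureDefs
variable [MeasurableSpace X] (υ : Measure X)

/-- The doubling condition for `κ`. -/
def DoublingFor (κ : ℝ) : Prop :=
  ∀ x : X, ∀ r : ℝ, 0 < r → υ (ball x (2*r)) ≤ (2:ℝ≥0∞) ^ κ * υ (ball x r)

/-- The `(q,p)`-Poincaré inequality for `τ` (for Lipschitz functions). -/
def PoincareFor (q p τ : ℝ) : Prop :=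
  ∀ x : X, ∀ r : ℝ, 0 < r → ∀ f : X → ℝ, IsLipFun f →
    (⨍ y in ball x r, |f y - ⨍ z in ball x r, f z ∂υ| ^ q ∂υ) ^ (1/q) ≤
      τ * r * ((⨍ y in ball x r, (pLip f y) ^ p ∂υ) ^ (1/p))

/-- `F_g(x,y)`: the infimum over minimal geodesics `γ` from `x` to `y` of
`∫_0^{d(x,y)} g(γ(s)) ds`. -/
noncomputable def segF (g : X → ℝ≥0∞) (x y : X) : ℝ≥0∞ :=
  ⨅ γ ∈ {γ : ℝ → X | IsMinGeodesic γ x y}, ∫⁻ s in Icc (0:ℝ) (dist x y), g (γ s)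

/-- The segment inequality for `lam`. -/
def SegmentIneqFor (lam : ℝ) : Prop :=
  ∀ x : X, ∀ r : ℝ, 0 < r → ∀ g : X → ℝ≥0∞, Measurable g →
    (∫⁻ pr in (ball x r) ×ˢ (ball x r), segF g pr.1 pr.2 ∂(υ.prod υ)) ≤
      ENNReal.ofReal (lam * r) * υ (ball x r) * ∫⁻ z in ball x (3*r), g z ∂υ

/-- The first eigenvalue of the `p`-Laplacian (`∞` if there is no competitor). -/
noncomputable def lambda1 (p : ℝ) : ℝ≥0∞ :=
  ⨅ f ∈ {f : X → ℝ | IsLipFun f ∧ (∫ x, |f x| ^ p ∂υ) = 1 ∧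
      (∫ x, |f x| ^ (p-2) * f x ∂υ) = 0},
    ENNReal.ofReal (∫ x, (pLip f x) ^ p ∂υ)

/-- Minkowski's exterior boundary measure
`υ⁺(A) = liminf_{r → 0+} (υ(B_r(A)) - υ(A))/r`. -/
noncomputable def minkBoundary (A : Set X) : ℝ≥0∞ :=
  Filter.liminf (fun r : ℝ => (υ (thickening r A) - υ A) / ENNReal.ofReal r) (𝓝[>] (0:ℝ))

/-- The Cheeger constant (`∞` if there is no competitor). -/
noncomputable def cheeger : ℝ≥0∞ :=
  ⨅ A ∈ {A : Set X | MeasurableSet A ∧ 0 < υ A ∧ υ A ≤ 1/2}, minkBoundary υ A / υ A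

/-- `λ_{1,p}` for `p ∈ [1, ∞)`, with `λ_{1,1} := h(X)` the Cheeger constant. -/
noncomputable def lam1 (p : ℝ) : ℝ≥0∞ := if p = 1 then cheeger υ else lambda1 υ p

/-- `c_p(f) = inf_{c ∈ ℝ} (∫ |f - c|^p dυ)^{1/p}`. -/
noncomputable def cP (p : ℝ) (f : X → ℝ) : ℝ :=
  ⨅ c : ℝ, (∫ x, |f x - c| ^ p ∂υ) ^ (1/p)

/-- `M` is a median of `f`. -/
def IsMedian (f : X → ℝ) (M : ℝ) : Prop :=
  (1/2 : ℝ≥0∞) ≤ υ {x | M ≤ f x} ∧ (1/2 : ℝ≥0∞) ≤ υ {x | f x ≤ M}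

end MeasureDefs

/-- The global Lipschitz constant `sup_{a ≠ b} |f a - f b| / dist a b`. -/
noncomputable def globalLip (f : X → ℝ) : ℝ :=
  sSup {L : ℝ | ∃ a b : X, a ≠ b ∧ L = |f a - f b| / dist a b}


/-!
Fix a competitor `f` for `λ_{1,q}`. For `r > 1` the function `t ↦ ∫ |f - t|^{r-2} (f - t)` is
continuous and strictly decreasing, so it has a zero `T r`; as `r → q` these functions converge
pointwise to the one for `r = q`, whose zero is `t = 0`, hence `T r → 0`. Normalising `f - T r` in
`L^r` gives a competitor for `λ_{1,r}` with Rayleigh quotient `∫ (Lip f)^r / ∫ |f - T r|^r`, and by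
bounded convergence this quotient tends to `∫ (Lip f)^q / ∫ |f|^q = ∫ (Lip f)^q`.
-/

noncomputable def signedRpow (r s : ℝ) : ℝ := |s| ^ (r - 2) * s

theorem signedRpow_zero (r : ℝ) : signedRpow r 0 = 0 := by
  simp [signedRpow]

theorem signedRpow_neg (r s : ℝ) : signedRpow r (-s) = -signedRpow r s := by
  simp [signedRpow]

theorem signedRpow_mul_of_nonneg {a : ℝ} (ha : 0 ≤ a) (r s : ℝ) :
    signedRpow r (a * s) = a ^ (r - 2) * a * signedRpow r s := by
  rw [signedRpow, signedRpow, abs_mul, abs_of_nonneg ha, Real.mul_rpow ha (abs_nonneg s)]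
  ring

theorem abs_signedRpow {r : ℝ} (hr : r ≠ 1) (s : ℝ) : |signedRpow r s| = |s| ^ (r - 1) := by
  rcases eq_or_ne s 0 with rfl | hs
  · simp [signedRpow, Real.zero_rpow (sub_ne_zero.2 hr)]
  · rw [signedRpow, abs_mul, abs_of_nonneg (Real.rpow_nonneg (abs_nonneg s) _),
      ← Real.rpow_add_one (abs_ne_zero.2 hs)]
    ring_nf

theorem signedRpow_of_nonneg {r s : ℝ} (hr : r ≠ 1) (hs : 0 ≤ s) :
    signedRpow r s = s ^ (r - 1) := by
  have h0 : 0 ≤ signedRpow r s := mul_nonneg (Real.rpow_nonneg (abs_nonneg s) _) hs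
  rw [← abs_of_nonneg h0, abs_signedRpow hr, abs_of_nonneg hs]

theorem strictMono_signedRpow {r : ℝ} (hr : 1 < r) : StrictMono (signedRpow r) :=
  strictMono_of_odd_strictMonoOn_nonneg (signedRpow_neg r) fun a ha b hb hab => by
    rw [signedRpow_of_nonneg hr.ne' ha, signedRpow_of_nonneg hr.ne' hb]
    exact Real.rpow_lt_rpow ha hab (by linarith)

theorem continuous_signedRpow {r : ℝ} (hr : 1 < r) : Continuous (signedRpow r) := by
  refine continuous_iff_continuousAt.2 fun s => ?_
  rcases eq_or_ne s 0 with rfl | hs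
  · have hlim : Tendsto (fun s : ℝ => |s| ^ (r - 1)) (𝓝 0) (𝓝 0) := by
      have := ((Real.continuous_rpow_const (by linarith : 0 ≤ r - 1)).comp
        continuous_abs).tendsto (0 : ℝ)
      simpa only [Function.comp_def, abs_zero, Real.zero_rpow (sub_ne_zero.2 hr.ne')] using this
    simpa [ContinuousAt, signedRpow] using
      squeeze_zero_norm (fun s => (abs_signedRpow hr.ne' s).le) hlim
  · exact ((Real.continuousAt_rpow_const _ _ (Or.inl (abs_ne_zero.2 hs))).comp
      continuous_abs.continuousAt).mul continuousAt_id

theorem continuous_signedRpow_exponent (s : ℝ) : Continuous fun r => signedRpow r s := by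
  rcases eq_or_ne s 0 with rfl | hs
  · simpa [signedRpow] using continuous_const
  · exact (continuous_const.rpow (continuous_id.sub continuous_const)
      fun _ => Or.inl (abs_ne_zero.2 hs)).mul continuous_const

theorem rpow_le_max_one_rpow {b B e c : ℝ} (hb : 0 ≤ b) (hbB : b ≤ B) (he : 0 ≤ e) (hec : e ≤ c) :
    b ^ e ≤ max 1 B ^ c :=
  (Real.rpow_le_rpow hb (hbB.trans (le_max_right 1 B)) he).trans
    (Real.rpow_le_rpow_of_exponent_le (le_max_left 1 B) hec)

theorem tendsto_of_apply_eq_of_strictAnti {ι β γ : Type*} [LinearOrder β] [TopologicalSpace β]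
    [OrderTopology β] [LinearOrder γ] [TopologicalSpace γ] [OrderTopology γ] {l : Filter ι}
    {φ : ι → β → γ} {ψ : β → γ} {T : ι → β} {t₀ : β} {c : γ} (hψ : StrictAnti ψ) (hψt₀ : ψ t₀ = c)
    (hφψ : ∀ t, Tendsto (fun i => φ i t) l (𝓝 (ψ t))) (hφ : ∀ᶠ i in l, StrictAnti (φ i))
    (hT : ∀ᶠ i in l, φ i (T i) = c) : Tendsto T l (𝓝 t₀) := by
  refine tendsto_order.2 ⟨fun a ha => ?_, fun b hb => ?_⟩
  · filter_upwards [(hφψ a).eventually_const_lt (hψt₀ ▸ hψ ha), hφ, hT] with i hi hφi hTi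
    exact (StrictAnti.lt_iff_gt hφi).1 (hTi ▸ hi)
  · filter_upwards [(hφψ b).eventually_lt_const (hψt₀ ▸ hψ hb), hφ, hT] with i hi hφi hTi
    exact (StrictAnti.lt_iff_gt hφi).1 (hTi ▸ hi)

section Integral

variable {α : Type*} [MeasurableSpace α] {μ : Measure α}

theorem integral_lt_integral_of_forall_lt [NeZero μ] {g h : α → ℝ} (hg : Integrable g μ)
    (hh : Integrable h μ) (hgh : ∀ x, g x < h x) : ∫ x, g x ∂μ < ∫ x, h x ∂μ := by
  have hpos : 0 < ∫ x, (h x - g x) ∂μ := by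
    rw [integral_pos_iff_support_of_nonneg (fun x => sub_nonneg.2 (hgh x).le) (hh.sub hg),
      Function.support_eq_univ fun x => (sub_pos.2 (hgh x)).ne', Measure.measure_univ_pos]
    exact NeZero.ne μ
  rw [integral_sub hh hg] at hpos
  linarith

theorem integral_rpow_eq_zero_of_not_aestronglyMeasurable {g : α → ℝ} {r : ℝ} (hr : 0 < r)
    (hg0 : ∀ x, 0 ≤ g x) (hg : ¬AEStronglyMeasurable g μ) : ∫ x, g x ^ r ∂μ = 0 :=
  integral_undef fun hint => hg <|
    ((Real.continuous_rpow_const (inv_nonneg.2 hr.le)).comp_aestronglyMeasurable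
      hint.aestronglyMeasurable).congr (ae_of_all _ fun x => Real.rpow_rpow_inv (hg0 x) hr.ne')

variable [IsFiniteMeasure μ]

theorem tendsto_integral_abs_rpow {ι : Type*} {l : Filter ι} [l.IsCountablyGenerated]
    {G : ι → α → ℝ} {g : α → ℝ} {p : ι → ℝ} {q C : ℝ} (hq : 0 < q) (hp : Tendsto p l (𝓝 q))
    (hGm : ∀ᶠ i in l, AEStronglyMeasurable (G i) μ) (hGC : ∀ᶠ i in l, ∀ x, |G i x| ≤ C)
    (hGg : ∀ x, Tendsto (fun i => G i x) l (𝓝 (g x))) :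
    Tendsto (fun i => ∫ x, |G i x| ^ p i ∂μ) l (𝓝 (∫ x, |g x| ^ q ∂μ)) := by
  have hpq : ∀ᶠ i in l, p i ∈ Ioo 0 (q + 1) := hp.eventually (Ioo_mem_nhds hq (by linarith))
  refine tendsto_integral_filter_of_norm_le_const ?_ ⟨max 1 C ^ (q + 1), ?_⟩
    (ae_of_all _ fun x => ((continuous_abs.tendsto _).comp (hGg x)).rpow hp (Or.inr hq))
  · filter_upwards [hGm, hpq] with i hGi hpi
    exact (Real.continuous_rpow_const hpi.1.le).comp_aestronglyMeasurable hGi.norm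
  · filter_upwards [hGC, hpq] with i hGi hpi
    refine ae_of_all _ fun x => ?_
    rw [Real.norm_eq_abs, abs_of_nonneg (Real.rpow_nonneg (abs_nonneg _) _)]
    exact rpow_le_max_one_rpow (abs_nonneg _) (hGi x) hpi.1.le hpi.2.le

-- No measurability is assumed: for a non-measurable `g` all the integrals near `q` are junk zeros.
theorem continuousAt_integral_rpow {g : α → ℝ} {q C : ℝ} (hq : 0 < q) (hg0 : ∀ x, 0 ≤ g x)
    (hgC : ∀ x, g x ≤ C) : ContinuousAt (fun r => ∫ x, g x ^ r ∂μ) q := by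
  by_cases hg : AEStronglyMeasurable g μ
  · have h := tendsto_integral_abs_rpow (μ := μ) (G := fun _ => g) (p := fun r => r) hq tendsto_id
      (.of_forall fun _ => hg) (.of_forall fun _ x => (abs_of_nonneg (hg0 x)).trans_le (hgC x))
      fun _ => tendsto_const_nhds
    simp only [abs_of_nonneg (hg0 _)] at h
    exact h
  · refine tendsto_const_nhds.congr' ?_
    filter_upwards [lt_mem_nhds hq] with r hr
    rw [integral_rpow_eq_zero_of_not_aestronglyMeasurable hq hg0 hg,
      integral_rpow_eq_zero_of_not_aestronglyMeasurable hr hg0 hg]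

end Integral

section Balance

variable {α : Type*} [MeasurableSpace α] {μ : Measure α} [IsFiniteMeasure μ] {f : α → ℝ} {M : ℝ}

theorem integrable_signedRpow_sub {r : ℝ} (hr : 1 < r) (hf : AEStronglyMeasurable f μ)
    (hM : ∀ x, |f x| ≤ M) (t : ℝ) : Integrable (fun x => signedRpow r (f x - t)) μ :=
  Integrable.of_bound ((continuous_signedRpow hr).comp_aestronglyMeasurable
      (hf.sub aestronglyMeasurable_const)) ((M + |t|) ^ (r - 1))
    (ae_of_all _ fun x => by
      rw [Real.norm_eq_abs, abs_signedRpow hr.ne']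
      exact Real.rpow_le_rpow (abs_nonneg _) ((abs_sub _ _).trans (by linarith [hM x]))
        (by linarith))

theorem strictAnti_integral_signedRpow_sub [NeZero μ] {r : ℝ} (hr : 1 < r)
    (hf : AEStronglyMeasurable f μ) (hM : ∀ x, |f x| ≤ M) :
    StrictAnti fun t => ∫ x, signedRpow r (f x - t) ∂μ := fun t t' htt' =>
  integral_lt_integral_of_forall_lt (integrable_signedRpow_sub hr hf hM t')
    (integrable_signedRpow_sub hr hf hM t) fun x => strictMono_signedRpow hr (by linarith)

theorem continuous_integral_signedRpow_sub {r : ℝ} (hr : 1 < r) (hf : AEStronglyMeasurable f μ)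
    (hM : ∀ x, |f x| ≤ M) : Continuous fun t => ∫ x, signedRpow r (f x - t) ∂μ := by
  refine continuous_iff_continuousAt.2 fun t₀ => tendsto_integral_filter_of_norm_le_const
    (.of_forall fun t => (integrable_signedRpow_sub hr hf hM t).aestronglyMeasurable)
    ⟨(M + (|t₀| + 1)) ^ (r - 1), ?_⟩
    (ae_of_all _ fun x => ((continuous_signedRpow hr).tendsto _).comp
      (tendsto_const_nhds.sub tendsto_id))
  filter_upwards [ball_mem_nhds t₀ one_pos] with t ht
  refine ae_of_all _ fun x => ?_
  have hdist : |t - t₀| < 1 := by rwa [mem_ball, Real.dist_eq] at ht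
  rw [Real.norm_eq_abs, abs_signedRpow hr.ne']
  exact Real.rpow_le_rpow (abs_nonneg _) ((abs_sub _ _).trans
    (by linarith [hM x, abs_sub_abs_le_abs_sub t t₀])) (by linarith)

theorem exists_integral_signedRpow_sub_eq_zero {r : ℝ} (hr : 1 < r)
    (hf : AEStronglyMeasurable f μ) (hM : ∀ x, |f x| ≤ M) :
    ∃ t, ∫ x, signedRpow r (f x - t) ∂μ = 0 := by
  have hle : ∫ x, signedRpow r (f x - M) ∂μ ≤ 0 := integral_nonpos fun x =>
    ((strictMono_signedRpow hr).monotone (by linarith [(abs_le.1 (hM x)).2])).trans_eq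
      (signedRpow_zero r)
  have hge : 0 ≤ ∫ x, signedRpow r (f x - -M) ∂μ := integral_nonneg fun x =>
    (signedRpow_zero r).symm.trans_le
      ((strictMono_signedRpow hr).monotone (by linarith [(abs_le.1 (hM x)).1]))
  obtain ⟨t, -, ht⟩ := intermediate_value_uIcc
    (continuous_integral_signedRpow_sub hr hf hM).continuousOn (mem_uIcc.2 (Or.inl ⟨hle, hge⟩))
  exact ⟨t, ht⟩

theorem continuousAt_integral_signedRpow_sub_exponent {q : ℝ} (hq : 1 < q)
    (hf : AEStronglyMeasurable f μ) (hM : ∀ x, |f x| ≤ M) (t : ℝ) :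
    ContinuousAt (fun r => ∫ x, signedRpow r (f x - t) ∂μ) q := by
  have hr : ∀ᶠ r in 𝓝 q, r ∈ Ioo 1 (q + 1) := Ioo_mem_nhds hq (by linarith)
  refine tendsto_integral_filter_of_norm_le_const ?_ ⟨max 1 (M + |t|) ^ q, ?_⟩
    (ae_of_all _ fun x => (continuous_signedRpow_exponent _).continuousAt)
  · filter_upwards [hr] with r hr
    exact (integrable_signedRpow_sub hr.1 hf hM t).aestronglyMeasurable
  · filter_upwards [hr] with r hr
    refine ae_of_all _ fun x => ?_
    rw [Real.norm_eq_abs, abs_signedRpow hr.1.ne']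
    exact rpow_le_max_one_rpow (abs_nonneg _) ((abs_sub _ _).trans (by linarith [hM x]))
      (by linarith [hr.1]) (by linarith [hr.2])

theorem exists_tendsto_zero_integral_signedRpow_sub_eq_zero [NeZero μ] {q : ℝ} (hq : 1 < q)
    (hf : AEStronglyMeasurable f μ) (hM : ∀ x, |f x| ≤ M)
    (hbal : ∫ x, signedRpow q (f x) ∂μ = 0) :
    ∃ T : ℝ → ℝ, Tendsto T (𝓝[>] q) (𝓝 0) ∧
      ∀ r, 1 < r → ∫ x, signedRpow r (f x - T r) ∂μ = 0 := by
  have hroot : ∀ r, ∃ t, 1 < r → ∫ x, signedRpow r (f x - t) ∂μ = 0 := fun r =>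
    if hr : 1 < r then (exists_integral_signedRpow_sub_eq_zero hr hf hM).imp fun _ ht _ => ht
    else ⟨0, fun h => absurd h hr⟩
  choose T hT using hroot
  have hr : ∀ᶠ r in 𝓝[>] q, 1 < r := eventually_nhdsWithin_of_forall fun r hr => hq.trans hr
  refine ⟨T, tendsto_of_apply_eq_of_strictAnti (strictAnti_integral_signedRpow_sub hq hf hM)
    (by simpa using hbal) (fun t => ?_)
    (hr.mono fun r hr => strictAnti_integral_signedRpow_sub hr hf hM) (hr.mono hT), hT⟩
  exact (continuousAt_integral_signedRpow_sub_exponent hq hf hM t).mono_left nhdsWithin_le_nhds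

end Balance

section PointwiseLip

open scoped Pointwise

theorem pLip_nonneg (f : X → ℝ) (x : X) : 0 ≤ pLip f x := by
  unfold pLip
  split_ifs
  · exact le_rfl
  · exact Real.iInf_nonneg fun r => Real.sSup_nonneg <| by
      rintro _ ⟨y, -, rfl⟩
      positivity

theorem pLip_le {f : X → ℝ} {K : ℝ≥0} (hf : LipschitzWith K f) (x : X) : pLip f x ≤ K := by
  unfold pLip
  split_ifs
  · exact K.coe_nonneg
  · refine ciInf_le_of_le ⟨0, ?_⟩ ⟨1, mem_Ioi.2 one_pos⟩ ?_
    · rintro _ ⟨r, rfl⟩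
      exact Real.sSup_nonneg <| by
        rintro _ ⟨y, -, rfl⟩
        positivity
    · refine Real.sSup_le ?_ K.coe_nonneg
      rintro _ ⟨y, ⟨-, hy⟩, rfl⟩
      rw [div_le_iff₀ (dist_pos.2 (Ne.symm hy)), ← Real.dist_eq]
      exact hf.dist_le_mul x y

theorem pLip_const_mul_sub (f : X → ℝ) {a : ℝ} (ha : 0 ≤ a) (t : ℝ) (x : X) :
    pLip (fun y => a * (f y - t)) x = a * pLip f x := by
  unfold pLip
  split_ifs
  · simp
  · rw [Real.mul_iInf_of_nonneg ha]
    congr 1 with r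
    have himg : (fun y => |a * (f x - t) - a * (f y - t)| / dist x y) '' (ball x r.1 \ {x})
        = a • (fun y => |f x - f y| / dist x y) '' (ball x r.1 \ {x}) := by
      rw [← image_smul, image_image]
      refine image_congr fun y _ => ?_
      rw [smul_eq_mul, ← mul_sub, sub_sub_sub_cancel_right, abs_mul, abs_of_nonneg ha,
        mul_div_assoc]
    rw [himg, Real.sSup_smul_of_nonneg ha, smul_eq_mul]

end PointwiseLip

-- `(f - t) / ‖f - t‖_r` is a competitor for `λ_{1,r}`.
theorem lambda1_le_of_integral_signedRpow_sub_eq_zero [MeasurableSpace X] (υ : Measure X)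
    {f : X → ℝ} {r t : ℝ} (hr : r ≠ 0) (hf : IsLipFun f)
    (hbal : ∫ x, signedRpow r (f x - t) ∂υ = 0) (hI : 0 < ∫ x, |f x - t| ^ r ∂υ) :
    lambda1 υ r ≤ ENNReal.ofReal ((∫ x, |f x - t| ^ r ∂υ)⁻¹ * ∫ x, pLip f x ^ r ∂υ) := by
  obtain ⟨K, hK⟩ := hf
  set I := ∫ x, |f x - t| ^ r ∂υ
  set a := I⁻¹ ^ r⁻¹
  have ha : 0 ≤ a := by positivity
  have har : a ^ r = I⁻¹ := Real.rpow_inv_rpow (inv_nonneg.2 hI.le) hr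
  have hmem : (fun x => a * (f x - t)) ∈ {f : X → ℝ | IsLipFun f ∧ (∫ x, |f x| ^ r ∂υ) = 1 ∧
      (∫ x, |f x| ^ (r - 2) * f x ∂υ) = 0} := by
    refine ⟨⟨_, (lipschitzWith_smul a).comp
      ((IsometryEquiv.subRight t).isometry.lipschitz.comp hK)⟩, ?_, ?_⟩
    · simp only [abs_mul, abs_of_nonneg ha, Real.mul_rpow ha (abs_nonneg _), har]
      rw [integral_const_mul, inv_mul_cancel₀ hI.ne']
    · change ∫ x, signedRpow r (a * (f x - t)) ∂υ = 0
      simp only [signedRpow_mul_of_nonneg ha]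
      rw [integral_const_mul, hbal, mul_zero]
  refine (iInf₂_le _ hmem).trans_eq ?_
  simp only [pLip_const_mul_sub f ha, Real.mul_rpow ha (pLip_nonneg _ _), har]
  rw [integral_const_mul]

theorem limsup_lambda1_nhdsGT_le [CompactSpace X] [MeasurableSpace X] [OpensMeasurableSpace X]
    (υ : Measure X) [IsFiniteMeasure υ] [NeZero υ] {q : ℝ} (hq : 1 < q) :
    limsup (fun r => lambda1 υ r) (𝓝[>] q) ≤ lambda1 υ q := by
  refine le_iInf₂ fun f ⟨hLip, hnorm, hbal⟩ => ?_
  obtain ⟨K, hK⟩ := hLip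
  have hfm : AEStronglyMeasurable f υ := hK.continuous.aestronglyMeasurable
  obtain ⟨M, hM⟩ := isCompact_univ.exists_bound_of_continuousOn hK.continuous.continuousOn
  replace hM : ∀ x, |f x| ≤ M := fun x => hM x (mem_univ x)
  have hr : ∀ᶠ r in 𝓝[>] q, 1 < r := eventually_nhdsWithin_of_forall fun r hr => hq.trans hr
  obtain ⟨T, hT0, hT⟩ := exists_tendsto_zero_integral_signedRpow_sub_eq_zero hq hfm hM hbal
  have hI : Tendsto (fun r => ∫ x, |f x - T r| ^ r ∂υ) (𝓝[>] q) (𝓝 1) := hnorm ▸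
    tendsto_integral_abs_rpow (p := fun r => r) (C := M + 1) (by linarith)
      (tendsto_id.mono_left nhdsWithin_le_nhds)
      (.of_forall fun r => hfm.sub aestronglyMeasurable_const)
      ((hT0.eventually (Ioo_mem_nhds neg_one_lt_zero one_pos)).mono fun r hTr x =>
        (abs_sub _ _).trans (by linarith [hM x, abs_lt.2 hTr]))
      fun x => by simpa using tendsto_const_nhds.sub hT0
  have hJ : Tendsto (fun r => ∫ x, pLip f x ^ r ∂υ) (𝓝[>] q) (𝓝 (∫ x, pLip f x ^ q ∂υ)) :=
    (continuousAt_integral_rpow (by linarith) (pLip_nonneg f) (pLip_le hK)).mono_left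
      nhdsWithin_le_nhds
  have hbound : ∀ᶠ r in 𝓝[>] q, lambda1 υ r ≤
      ENNReal.ofReal ((∫ x, |f x - T r| ^ r ∂υ)⁻¹ * ∫ x, pLip f x ^ r ∂υ) := by
    filter_upwards [hr, hI.eventually_const_lt one_pos] with r hr hIr
    exact lambda1_le_of_integral_signedRpow_sub_eq_zero υ (by linarith) ⟨K, hK⟩ (hT r hr) hIr
  calc limsup (fun r => lambda1 υ r) (𝓝[>] q)
      ≤ limsup (fun r => ENNReal.ofReal ((∫ x, |f x - T r| ^ r ∂υ)⁻¹ * ∫ x, pLip f x ^ r ∂υ))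
          (𝓝[>] q) := limsup_le_limsup hbound
    _ = ENNReal.ofReal (∫ x, pLip f x ^ q ∂υ) :=
        (ENNReal.tendsto_ofReal (by simpa using (hI.inv₀ one_ne_zero).mul hJ)).limsup_eq

/-- `limsup_{r → q⁺} λ_{1,r}(X) ≤ λ_{1,q}(X)`. -/
theorem stmt18 {X : Type*} [MetricSpace X] [CompactSpace X] [MeasurableSpace X] [BorelSpace X]
    (υ : Measure X) [IsProbabilityMeasure υ]
    (q : ℝ) (hq : 1 < q) :
    Filter.limsup (fun r : ℝ => lambda1 υ r) (𝓝[>] q) ≤ lambda1 υ q ∧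
      ∀ rs : ℕ → ℝ, (∀ i, q < rs i) → StrictAnti rs →
        Filter.Tendsto rs Filter.atTop (𝓝 q) →
        Filter.limsup (fun i => lambda1 υ (rs i)) Filter.atTop ≤ lambda1 υ q := by
  have hlim := limsup_lambda1_nhdsGT_le υ hq
  refine ⟨hlim, fun rs hgt _ hrs => le_trans ?_ hlim⟩
  exact (limsup_comp (fun r => lambda1 υ r) rs atTop).trans_le
    (limsup_le_limsup_of_le (tendsto_nhdsWithin_iff.2 ⟨hrs, .of_forall hgt⟩))
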